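/- For λ ∈ ℂ \ {0, 1}, let π_λ be the representation of the primitive poset (5,2,1) in V = ℂ⁶ with basis e₁,…,e₆ consisting of the chain V₁ = span{e₁} ⊆ V₂ = span{e₁,e₂} ⊆ V₃ = span{e₁,e₂,e₃} ⊆ V₄ = span{e₁,e₂,e₃,e₄} ⊆ V₅ = span{e₁,e₂,e₃,e₄,e₅}, the chain V₆ = span{e₅,e₆} ⊆ V₇ = span{e₃,e₄,e₅,e₆}, and the subspace V₈ = span{e₁+e₃+e₄+e₅, λe₁+e₃+e₅+e₆, e₂+e₄}. Then each π_λ is indecomposable, and for λ ≠ μ (both in ℂ \ {0,1}) the representations π_λ and π_μ are not isomorphic; in particular the poset (5,2,1) has infinitely many pairwise non-isomorphic indecomposable representations. -/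

import Mathlib

noncomputable section

/-- A system of subspaces `A : ι → Submodule ℂ V` is decomposable if the ambient space
splits as a direct sum of two nonzero subspaces compatible with every member of the system
(internal reformulation of being isomorphic to a direct sum of two representations with
nonzero ambient spaces). -/
def IsDecomposableSystem {ι V : Type*} [AddCommGroup V] [Module ℂ V]
    (A : ι → Submodule ℂ V) : Prop :=
  ∃ U W : Submodule ℂ V, IsCompl U W ∧ U ≠ ⊥ ∧ W ≠ ⊥ ∧
    ∀ i, A i = A i ⊓ U ⊔ A i ⊓ W

/-- A system of subspaces is indecomposable if the ambient space is nonzero and the system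
is not decomposable. -/
def IsIndecomposableSystem {ι V : Type*} [AddCommGroup V] [Module ℂ V]
    (A : ι → Submodule ℂ V) : Prop :=
  (∃ v : V, v ≠ 0) ∧ ¬ IsDecomposableSystem A

/-- Two systems of subspaces are isomorphic if there is an invertible linear map carrying
each member of the first system onto the corresponding member of the second. -/
def RepIso {ι V W : Type*} [AddCommGroup V] [Module ℂ V] [AddCommGroup W] [Module ℂ W]
    (A : ι → Submodule ℂ V) (B : ι → Submodule ℂ W) : Prop :=
  ∃ C : V ≃ₗ[ℂ] W, ∀ i, (A i).map (C : V →ₗ[ℂ] W) = B i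

/-- The representation `π_λ` of the primitive poset `(5,2,1)` in `ℂ⁶`: the chain
`V₁ = span{e₁} ⊆ V₂ = span{e₁,e₂} ⊆ V₃ = span{e₁,e₂,e₃} ⊆ V₄ = span{e₁,e₂,e₃,e₄} ⊆
V₅ = span{e₁,e₂,e₃,e₄,e₅}`, the chain `V₆ = span{e₅,e₆} ⊆ V₇ = span{e₃,e₄,e₅,e₆}`, and
`V₈ = span{e₁+e₃+e₄+e₅, λe₁+e₃+e₅+e₆, e₂+e₄}` (indices `0,…,7` for `V₁,…,V₈`). -/
def piRep (lam : ℂ) : Fin 8 → Submodule ℂ (Fin 6 → ℂ) :=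
  ![Submodule.span ℂ {![1, 0, 0, 0, 0, 0]},
    Submodule.span ℂ {![1, 0, 0, 0, 0, 0], ![0, 1, 0, 0, 0, 0]},
    Submodule.span ℂ {![1, 0, 0, 0, 0, 0], ![0, 1, 0, 0, 0, 0], ![0, 0, 1, 0, 0, 0]},
    Submodule.span ℂ {![1, 0, 0, 0, 0, 0], ![0, 1, 0, 0, 0, 0], ![0, 0, 1, 0, 0, 0],
      ![0, 0, 0, 1, 0, 0]},
    Submodule.span ℂ {![1, 0, 0, 0, 0, 0], ![0, 1, 0, 0, 0, 0], ![0, 0, 1, 0, 0, 0],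
      ![0, 0, 0, 1, 0, 0], ![0, 0, 0, 0, 1, 0]},
    Submodule.span ℂ {![0, 0, 0, 0, 1, 0], ![0, 0, 0, 0, 0, 1]},
    Submodule.span ℂ {![0, 0, 1, 0, 0, 0], ![0, 0, 0, 1, 0, 0], ![0, 0, 0, 0, 1, 0],
      ![0, 0, 0, 0, 0, 1]},
    Submodule.span ℂ {![1, 0, 1, 1, 1, 0], ![lam, 0, 1, 0, 1, 1], ![0, 1, 0, 1, 0, 0]}]

/-!
Every linear map `C` carrying `π_λ` into `π_μ` is a scalar `a • id`: the seven coordinate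
subspaces make its matrix block upper triangular with `2 × 2` blocks on `{e₁, e₂}`, `{e₃, e₄}`,
`{e₅, e₆}`, and the images of the three generators of `V₈` force all blocks to be the same
scalar. A nonzero scalar carries `V₈(λ)` into `V₈(μ)` only if `λ = μ`. So the projections of a
decomposition of `π_λ` would be scalars, hence `0` or `1`, and an isomorphism `π_λ ≅ π_μ` forces
`λ = μ`.
-/

open Matrix

theorem isIndecomposableSystem_of_forall_eq_smul_id {ι V : Type*} [AddCommGroup V]
    [Module ℂ V] [Nontrivial V] (A : ι → Submodule ℂ V)
    (h : ∀ P : V →ₗ[ℂ] V, (∀ i, (A i).map P ≤ A i) → ∃ a : ℂ, P = a • LinearMap.id) :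
    IsIndecomposableSystem A := by
  refine ⟨exists_ne 0, ?_⟩
  rintro ⟨U, W, hUW, hU, hW, hA⟩
  obtain ⟨a, ha⟩ := h (U.projection W hUW) fun i => by
    rw [hA i, Submodule.map_sup]
    refine sup_le_sup ?_ ?_ <;> rintro _ ⟨x, hx, rfl⟩
    · rwa [Submodule.projection_apply_of_mem_left hUW hx.2]
    · rw [Submodule.projection_apply_of_mem_right hUW hx.2]
      exact zero_mem _
  obtain ⟨u, hu, hu0⟩ := (Submodule.ne_bot_iff U).1 hU
  obtain ⟨w, hw, hw0⟩ := (Submodule.ne_bot_iff W).1 hW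
  have ha1 : a = 1 := smul_left_injective ℂ hu0 <| by
    simpa [ha] using Submodule.projection_apply_of_mem_left hUW hu
  have ha0 : a = 0 := by
    simpa [ha, hw0] using Submodule.projection_apply_of_mem_right hUW hw
  exact one_ne_zero (ha1.symm.trans ha0)

theorem piRep_chains (lam : ℂ) : piRep lam 0 ≤ piRep lam 1 ∧ piRep lam 1 ≤ piRep lam 2 ∧
    piRep lam 2 ≤ piRep lam 3 ∧ piRep lam 3 ≤ piRep lam 4 ∧ piRep lam 5 ≤ piRep lam 6 := by
  refine ⟨?_, ?_, ?_, ?_, ?_⟩ <;>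
    exact Submodule.span_mono fun x hx => by
      simp only [Set.mem_insert_iff, Set.mem_singleton_iff] at hx ⊢
      tauto

/-- `piRep lam i.castSucc` is the coordinate subspace spanned by the `Pi.single j 1` with
`j ∈ piRepSupport i` (coordinates numbered from `0`). -/
def piRepSupport : Fin 7 → Finset (Fin 6) :=
  ![{0}, {0, 1}, {0, 1, 2}, {0, 1, 2, 3}, {0, 1, 2, 3, 4}, {4, 5}, {2, 3, 4, 5}]

theorem single_mem_piRep (lam : ℂ) {i : Fin 7} {j : Fin 6} (hj : j ∈ piRepSupport i) :
    Pi.single j 1 ∈ piRep lam i.castSucc := by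
  fin_cases i <;> fin_cases j <;> simp [piRepSupport] at hj <;>
    exact Submodule.subset_span (by simp [funext_iff, Fin.forall_fin_succ])

theorem apply_eq_zero_of_mem_piRep {lam : ℂ} {i : Fin 7} {x : Fin 6 → ℂ}
    (hx : x ∈ piRep lam i.castSucc) {k : Fin 6} (hk : k ∉ piRepSupport i) : x k = 0 := by
  fin_cases i <;> refine LinearMap.eqOn_span' (f := LinearMap.proj k) (g := 0) ?_ hx <;>
    fin_cases k <;> simp [piRepSupport, Set.EqOn] at hk ⊢

theorem piRep_seven_equations {mu : ℂ} {x : Fin 6 → ℂ} (hx : x ∈ piRep mu 7) :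
    x 2 = x 4 ∧ x 3 + x 5 = x 1 + x 4 ∧ x 0 + (1 - mu) * x 5 = x 4 := by
  induction hx using Submodule.span_induction with
  | mem s hs =>
    simp only [Set.mem_insert_iff, Set.mem_singleton_iff] at hs
    rcases hs with rfl | rfl | rfl <;> simp
  | zero => simp
  | add x y _ _ hx hy =>
    simp only [Pi.add_apply]
    exact ⟨by linear_combination hx.1 + hy.1, by linear_combination hx.2.1 + hy.2.1,
      by linear_combination hx.2.2 + hy.2.2⟩
  | smul a x _ hx =>
    simp only [Pi.smul_apply, smul_eq_mul]
    exact ⟨by linear_combination a * hx.1, by linear_combination a * hx.2.1,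
      by linear_combination a * hx.2.2⟩

theorem eq_smul_id_of_map_piRep_le {lam mu : ℂ} {C : (Fin 6 → ℂ) →ₗ[ℂ] (Fin 6 → ℂ)}
    (h : ∀ i, (piRep lam i).map C ≤ piRep mu i) : ∃ a : ℂ, C = a • LinearMap.id := by
  obtain ⟨M, hC⟩ : ∃ M : Matrix (Fin 6) (Fin 6) ℂ, ∀ x, C x = M *ᵥ x :=
    ⟨_, fun x => (LinearMap.toMatrix'_mulVec C x).symm⟩
  have hmaps : ∀ i x, x ∈ piRep lam i → M *ᵥ x ∈ piRep mu i := fun i x hx =>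
    hC x ▸ h i (Submodule.mem_map_of_mem hx)
  have hzero : ∀ j k, (∃ i, j ∈ piRepSupport i ∧ k ∉ piRepSupport i) → M k j = 0 := by
    rintro j k ⟨i, hj, hk⟩
    simpa using apply_eq_zero_of_mem_piRep (hmaps _ _ (single_mem_piRep lam hj)) hk
  obtain ⟨u1, u2, u3⟩ := piRep_seven_equations
    (hmaps 7 ![1, 0, 1, 1, 1, 0] (Submodule.subset_span (by simp)))
  obtain ⟨v1, v2, -⟩ := piRep_seven_equations
    (hmaps 7 ![lam, 0, 1, 0, 1, 1] (Submodule.subset_span (by simp)))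
  obtain ⟨w1, w2, w3⟩ := piRep_seven_equations
    (hmaps 7 ![0, 1, 0, 1, 0, 0] (Submodule.subset_span (by simp)))
  simp (disch := decide) [mulVec, dotProduct, Fin.sum_univ_six, hzero] at u1 u2 u3 v1 v2 w1 w2 w3
  have h45 : M 4 5 = 0 := by linear_combination u1 - v1 - w1
  have hdiag : M 1 1 = M 0 0 ∧ M 2 2 = M 0 0 ∧ M 3 3 = M 0 0 ∧ M 4 4 = M 0 0 ∧ M 5 5 = M 0 0 :=
    ⟨by linear_combination u2 - u3 - w2, by linear_combination u1 - w1 - u3,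
      by linear_combination u2 - u3, by linear_combination -u3,
      by linear_combination v2 + h45 - u3⟩
  have hM : M = M 0 0 • 1 := by
    ext k j
    fin_cases k <;> fin_cases j <;> simp (disch := decide) [hzero, hdiag, h45, w1, w3, one_apply]
  generalize M 0 0 = a at hM
  exact ⟨a, LinearMap.ext fun x => by simp [hC, hM, smul_mulVec, one_mulVec]⟩

theorem eq_of_mem_piRep_seven {lam mu : ℂ} (h : ![lam, 0, 1, 0, 1, 1] ∈ piRep mu 7) :
    lam = mu := by
  have h₃ := (piRep_seven_equations h).2.2
  simp only [cons_val] at h₃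
  linear_combination h₃

theorem piRep_indecomposable (lam : ℂ) : IsIndecomposableSystem (piRep lam) :=
  isIndecomposableSystem_of_forall_eq_smul_id _ fun _ hP => eq_smul_id_of_map_piRep_le hP

theorem not_repIso_piRep {lam mu : ℂ} (hne : lam ≠ mu) : ¬ RepIso (piRep lam) (piRep mu) := by
  rintro ⟨C, hC⟩
  obtain ⟨a, ha⟩ := eq_smul_id_of_map_piRep_le fun i => (hC i).le
  have ha0 : a ≠ 0 := by
    rintro rfl
    obtain ⟨x, hx⟩ := exists_ne (0 : Fin 6 → ℂ)
    exact hx (C.map_eq_zero_iff.1 (by simpa using LinearMap.congr_fun ha x))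
  have hv : C ![lam, 0, 1, 0, 1, 1] ∈ piRep mu 7 :=
    hC 7 ▸ Submodule.mem_map_of_mem (Submodule.subset_span (by simp))
  rw [show C ![lam, 0, 1, 0, 1, 1] = a • ![lam, 0, 1, 0, 1, 1] by
    simpa using LinearMap.congr_fun ha ![lam, 0, 1, 0, 1, 1]] at hv
  exact hne (eq_of_mem_piRep_seven ((Submodule.smul_mem_iff _ ha0).1 hv))

/-- Each `π_λ` (λ ≠ 0, 1) is a representation of the primitive poset `(5,2,1)` and is
indecomposable, `π_λ ≇ π_μ` for `λ ≠ μ`, and in particular the poset `(5,2,1)` has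
infinitely many pairwise non-isomorphic indecomposable representations. -/
theorem poset521_infinite_family :
    (∀ lam : ℂ, piRep lam 0 ≤ piRep lam 1 ∧ piRep lam 1 ≤ piRep lam 2 ∧
      piRep lam 2 ≤ piRep lam 3 ∧ piRep lam 3 ≤ piRep lam 4 ∧
      piRep lam 5 ≤ piRep lam 6) ∧
    (∀ lam : ℂ, lam ≠ 0 → lam ≠ 1 → IsIndecomposableSystem (piRep lam)) ∧
    (∀ lam mu : ℂ, lam ≠ 0 → lam ≠ 1 → mu ≠ 0 → mu ≠ 1 → lam ≠ mu →
      ¬ RepIso (piRep lam) (piRep mu)) ∧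
    (∃ f : ℕ → (Fin 8 → Submodule ℂ (Fin 6 → ℂ)),
      (∀ n, f n 0 ≤ f n 1 ∧ f n 1 ≤ f n 2 ∧ f n 2 ≤ f n 3 ∧ f n 3 ≤ f n 4 ∧
        f n 5 ≤ f n 6) ∧
      (∀ n, IsIndecomposableSystem (f n)) ∧
      ∀ n m, n ≠ m → ¬ RepIso (f n) (f m)) := by
  refine ⟨piRep_chains, fun lam _ _ => piRep_indecomposable lam,
    fun lam mu _ _ _ _ hne => not_repIso_piRep hne,
    fun n => piRep n, fun n => piRep_chains n, fun n => piRep_indecomposable n,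
    fun n m hnm => not_repIso_piRep (Nat.cast_injective.ne hnm)⟩
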